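/- Any two abelian subgroups of S_n of maximal order with n ≡ 0 (mod 3) are conjugate in S_n. -/

import Mathlib

/-!
An abelian permutation group `G` is determined by where it sends one representative of each of
its orbits, because an element fixing a point fixes the whole orbit of that point. Hence
`|G| ≤ ∏ |O|` over the orbits, and `m ≤ 3 ^ (m / 3)` bounds this by `3 ^ k` when `n = 3k`, with
equality only if every orbit has three points and every choice of images of the representatives
is realised. In that case `G` contains, for each orbit, an element moving exactly that orbit,
necessarily a 3-cycle; these `k` disjoint 3-cycles generate a subgroup of order `3 ^ k`, hence
all of `G`. So a maximal abelian subgroup is generated by the cycles of a permutation of cycle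
type `(3, …, 3)`, and any two such permutations are conjugate.
-/

open Subgroup MulAction Function

namespace Nat

theorem pow_three_lt_three_pow {m : ℕ} (hm : m ≠ 3) : m ^ 3 < 3 ^ m := by
  obtain hm | hm : m < 3 ∨ 4 ≤ m := by omega
  · interval_cases m <;> norm_num
  · induction m, hm using Nat.le_induction with
    | base => norm_num
    | succ p hp ih =>
      calc (p + 1) ^ 3 ≤ 3 * p ^ 3 := by nlinarith [Nat.mul_le_mul hp hp]
        _ < 3 * 3 ^ p := by have := ih (by omega); omega
        _ = 3 ^ (p + 1) := by ring

theorem pow_three_le_three_pow (m : ℕ) : m ^ 3 ≤ 3 ^ m := by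
  rcases eq_or_ne m 3 with rfl | hm
  · rfl
  · exact (pow_three_lt_three_pow hm).le

end Nat

namespace Finset

variable {ι : Type*} {s : Finset ι} {m : ι → ℕ} {k : ℕ}

theorem prod_le_three_pow_of_sum_eq (hsum : ∑ i ∈ s, m i = 3 * k) : ∏ i ∈ s, m i ≤ 3 ^ k := by
  rw [← Nat.pow_le_pow_iff_left three_ne_zero, ← pow_mul, mul_comm, ← hsum, ← prod_pow,
    ← prod_pow_eq_pow_sum]
  exact prod_le_prod' fun i _ ↦ Nat.pow_three_le_three_pow (m i)

theorem eq_three_of_three_pow_le_prod (hpos : ∀ i ∈ s, 0 < m i)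
    (hsum : ∑ i ∈ s, m i = 3 * k) (hprod : 3 ^ k ≤ ∏ i ∈ s, m i) : ∀ i ∈ s, m i = 3 := by
  by_contra! ⟨i, hi, hne⟩
  have hlt : ∏ j ∈ s, m j ^ 3 < ∏ j ∈ s, 3 ^ m j :=
    prod_lt_prod (fun j hj ↦ pow_pos (hpos j hj) 3)
      (fun j _ ↦ Nat.pow_three_le_three_pow (m j)) ⟨i, hi, Nat.pow_three_lt_three_pow hne⟩
  rw [prod_pow, prod_pow_eq_pow_sum, hsum, mul_comm, pow_mul] at hlt
  exact (lt_of_pow_lt_pow_left₀ 3 (Nat.zero_le _) hlt).not_ge hprod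

end Finset

namespace MulAction

variable {G α : Type*} [Group G] [MulAction G α]

theorem orbitRel.Quotient.out_mem_orbit (ω : orbitRel.Quotient G α) : ω.out ∈ ω.orbit :=
  orbitRel.Quotient.mem_orbit.mpr ω.out_eq'

theorem orbitRel.Quotient.pairwise_disjoint_orbit :
    Pairwise (Disjoint on (orbitRel.Quotient.orbit : orbitRel.Quotient G α → Set α)) :=
  fun _ _ hne ↦ Set.disjoint_left.mpr fun _ hx hx' ↦
    hne ((orbitRel.Quotient.mem_orbit.mp hx).symm.trans (orbitRel.Quotient.mem_orbit.mp hx'))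

variable (G α)

noncomputable def smulOrbitOut (g : G) (ω : orbitRel.Quotient G α) : ω.orbit :=
  g • ⟨ω.out, ω.out_mem_orbit⟩

theorem sum_nat_card_orbit [Finite α] [Fintype (orbitRel.Quotient G α)] :
    ∑ ω : orbitRel.Quotient G α, Nat.card ω.orbit = Nat.card α := by
  rw [← Nat.card_sigma, Nat.card_congr (selfEquivSigmaOrbits' G α)]

variable {G α} [IsMulCommutative G]

theorem smul_eq_self_of_mem_orbit {ω : orbitRel.Quotient G α} {g : G} {x y : α}
    (hx : x ∈ ω.orbit) (hy : y ∈ ω.orbit) (hgx : g • x = x) : g • y = y := by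
  rw [orbitRel.Quotient.mem_orbit] at hx hy
  obtain ⟨h, rfl⟩ : y ∈ orbit G x := Quotient.exact' (hy.trans hx.symm)
  rw [smul_smul, mul_comm' g h, mul_smul, hgx]

variable (G α) [FaithfulSMul G α]

theorem smulOrbitOut_injective : Injective (smulOrbitOut G α) := by
  intro g h hgh
  refine inv_mul_eq_one.mp (eq_of_smul_eq_smul (α := α) fun x ↦ ?_)
  set ω : orbitRel.Quotient G α := Quotient.mk'' x
  rw [one_smul]
  refine smul_eq_self_of_mem_orbit ω.out_mem_orbit (orbitRel.Quotient.mem_orbit.mpr rfl) ?_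
  rw [mul_smul, inv_smul_eq_iff]
  exact congr_arg Subtype.val (congr_fun hgh ω).symm

theorem nat_card_le_prod_nat_card_orbit [Finite α] [Fintype (orbitRel.Quotient G α)] :
    Nat.card G ≤ ∏ ω : orbitRel.Quotient G α, Nat.card ω.orbit := by
  rw [← Nat.card_pi]
  exact Nat.card_le_card_of_injective _ (smulOrbitOut_injective G α)

variable {G α} [Finite α] {k : ℕ}

theorem nat_card_orbit_eq_three (hα : Nat.card α = 3 * k) (hG : 3 ^ k ≤ Nat.card G)
    (ω : orbitRel.Quotient G α) : Nat.card ω.orbit = 3 := by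
  have := Fintype.ofFinite (orbitRel.Quotient G α)
  refine Finset.eq_three_of_three_pow_le_prod (fun ω _ ↦ ?_) (by rw [sum_nat_card_orbit, hα])
    (hG.trans (nat_card_le_prod_nat_card_orbit G α)) ω (Finset.mem_univ ω)
  have := ω.nonempty_orbit.to_subtype
  exact Nat.card_pos

theorem nat_card_orbitRel_quotient (hα : Nat.card α = 3 * k) (hG : 3 ^ k ≤ Nat.card G) :
    Nat.card (orbitRel.Quotient G α) = k := by
  have := Fintype.ofFinite (orbitRel.Quotient G α)
  have hsum := sum_nat_card_orbit G α
  simp only [nat_card_orbit_eq_three hα hG, Finset.sum_const, Finset.card_univ,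
    smul_eq_mul] at hsum
  rw [Nat.card_eq_fintype_card]
  omega

theorem smulOrbitOut_bijective (hα : Nat.card α = 3 * k) (hG : 3 ^ k ≤ Nat.card G) :
    Bijective (smulOrbitOut G α) := by
  have := Fintype.ofFinite (orbitRel.Quotient G α)
  refine (Nat.bijective_iff_injective_and_card _).mpr ⟨smulOrbitOut_injective G α, ?_⟩
  refine (nat_card_le_prod_nat_card_orbit G α).antisymm ?_ |>.trans Nat.card_pi.symm
  refine (Finset.prod_le_three_pow_of_sum_eq ?_).trans hG
  rw [sum_nat_card_orbit, hα]

end MulAction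

namespace Equiv.Perm

variable {α : Type*} [DecidableEq α] [Fintype α]

theorem closure_cycleFactorsFinset_eq_range_noncommPiCoprod (g : Perm α) :
    closure (g.cycleFactorsFinset : Set (Perm α)) =
      (noncommPiCoprod g.pairwise_commute_of_mem_zpowers).range := by
  simp_rw [noncommPiCoprod_range, zpowers_eq_closure, ← Subgroup.closure_iUnion,
    Set.iUnion_singleton_eq_range, Subtype.range_coe_subtype, Finset.setOfPred_mem]

theorem nat_card_closure_cycleFactorsFinset (g : Perm α) :
    Nat.card (closure (g.cycleFactorsFinset : Set (Perm α))) = g.cycleType.prod := by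
  have hinj : Injective (noncommPiCoprod g.pairwise_commute_of_mem_zpowers) := by
    intro u v h
    have := OnCycleFactors.kerParam_injective g (a₁ := (1, u)) (a₂ := (1, v)) (by
      simpa [OnCycleFactors.kerParam, MonoidHom.noncommCoprod_apply] using h)
    exact (Prod.mk.inj this).2
  rw [closure_cycleFactorsFinset_eq_range_noncommPiCoprod,
    Nat.card_congr (MonoidHom.ofInjective hinj).toEquiv.symm, Nat.card_pi]
  simp only [Nat.card_zpowers]
  rw [Finset.univ_eq_attach, g.cycleFactorsFinset.prod_attach (fun c ↦ orderOf c), cycleType,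
    Finset.prod_map_val]
  exact Finset.prod_congr rfl fun c hc ↦ (mem_cycleFactorsFinset_iff.mp hc).1.orderOf

instance (g : Perm α) : IsMulCommutative (closure (g.cycleFactorsFinset : Set (Perm α))) :=
  isMulCommutative_closure fun _ hc _ hd ↦ (cycleFactorsFinset_mem_commute' g hc hd).eq

theorem map_conj_closure_cycleFactorsFinset (g k : Perm α) :
    (closure (g.cycleFactorsFinset : Set (Perm α))).map (MulAut.conj k).toMonoidHom =
      closure ((k * g * k⁻¹).cycleFactorsFinset : Set (Perm α)) := by
  rw [MonoidHom.map_closure]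
  congr 1
  ext c
  constructor
  · rintro ⟨c, hc, rfl⟩
    exact (mem_cycleFactorsFinset_conj g k c).mpr hc
  · intro hc
    refine ⟨k⁻¹ * c * k, (mem_cycleFactorsFinset_conj g k _).mp ?_, by simp [mul_assoc]⟩
    simpa [mul_assoc] using hc

theorem exists_cycleFactorsFinset_eq {S : Finset (Perm α)} (hcyc : ∀ c ∈ S, c.IsCycle)
    (hdisj : (S : Set (Perm α)).Pairwise Disjoint) : ∃ π : Perm α, π.cycleFactorsFinset = S :=
  ⟨S.noncommProd id (hdisj.mono' fun _ _ ↦ Disjoint.commute),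
    cycleFactorsFinset_eq_finset.mpr ⟨hcyc, hdisj, rfl⟩⟩

theorem exists_mem_support_eq_orbit (G : Subgroup (Perm α)) [IsMulCommutative G]
    (hsurj : Surjective (smulOrbitOut G α)) (ω : orbitRel.Quotient G α)
    (hω : ω.orbit.Nontrivial) : ∃ σ ∈ G, (σ.support : Set α) = ω.orbit := by
  obtain ⟨y, hy, hne⟩ := hω.exists_ne ω.out
  classical
  obtain ⟨g, hg⟩ := hsurj (update (smulOrbitOut G α 1) ω ⟨y, hy⟩)
  have hgω : g • ω.out = y := by
    simpa [smulOrbitOut] using congr_arg Subtype.val (congr_fun hg ω)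
  have hgω' (ω' : orbitRel.Quotient G α) (h : ω' ≠ ω) : g • ω'.out = ω'.out := by
    simpa [h, smulOrbitOut] using congr_arg Subtype.val (congr_fun hg ω')
  refine ⟨g, g.2, Set.ext fun x ↦ ?_⟩
  obtain ⟨ω', hx⟩ : ∃ ω' : orbitRel.Quotient G α, x ∈ ω'.orbit :=
    ⟨_, orbitRel.Quotient.mem_orbit.mpr rfl⟩
  rw [Finset.mem_coe, mem_support, ← Perm.smul_def, ← Subgroup.smul_def]
  rcases eq_or_ne ω' ω with rfl | h
  · refine iff_of_true (fun hgx ↦ hne ?_) hx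
    rw [← hgω, smul_eq_self_of_mem_orbit hx (orbitRel.Quotient.out_mem_orbit _) hgx]
  · refine iff_of_false (not_not.mpr ?_) fun hxω ↦ h ?_
    · exact smul_eq_self_of_mem_orbit ω'.out_mem_orbit hx (hgω' _ h)
    · rw [← orbitRel.Quotient.mem_orbit.mp hx, orbitRel.Quotient.mem_orbit.mp hxω]

theorem exists_cycleType_eq_replicate_of_surjective (G : Subgroup (Perm α)) [IsMulCommutative G]
    (hsurj : Surjective (smulOrbitOut G α))
    (h3 : ∀ ω : orbitRel.Quotient G α, Nat.card ω.orbit = 3) :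
    ∃ π : Perm α, π.cycleType = Multiset.replicate (Nat.card (orbitRel.Quotient G α)) 3 ∧
      closure (π.cycleFactorsFinset : Set (Perm α)) = G := by
  have := Fintype.ofFinite (orbitRel.Quotient G α)
  have hnt (ω : orbitRel.Quotient G α) : ω.orbit.Nontrivial := by
    rw [← Set.one_lt_ncard_iff_nontrivial, ← Nat.card_coe_set_eq, h3]
    norm_num
  choose σ hσG hσ using fun ω ↦ exists_mem_support_eq_orbit G hsurj ω (hnt ω)
  have hcard (ω : orbitRel.Quotient G α) : (σ ω).support.card = 3 := by
    rw [← h3 ω, ← hσ ω, Nat.card_coe_set_eq, Set.ncard_coe_finset]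
  have hinj : Injective σ := fun ω ω' h ↦
    orbitRel.Quotient.orbit_injective (by rw [← hσ, ← hσ, h])
  have hdisj : (Set.range σ).Pairwise Disjoint := by
    rw [← Set.image_univ, hinj.injOn.pairwise_image]
    intro ω _ ω' _ hne
    rw [onFun, disjoint_iff_disjoint_support, ← Finset.disjoint_coe, hσ, hσ]
    exact orbitRel.Quotient.pairwise_disjoint_orbit hne
  obtain ⟨π, hπ⟩ := exists_cycleFactorsFinset_eq (S := Finset.univ.image σ)
    (by simpa using fun ω ↦ (card_support_eq_three_iff.mp (hcard ω)).isCycle)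
    (by simpa using hdisj)
  have hct : π.cycleType = Multiset.replicate (Nat.card (orbitRel.Quotient G α)) 3 := by
    rw [cycleType_def, hπ, Multiset.eq_replicate]
    refine ⟨?_, by simp [hcard]⟩
    rw [Multiset.card_map, Finset.card_val, Finset.card_image_of_injective _ hinj,
      Finset.card_univ, Nat.card_eq_fintype_card]
  refine ⟨π, hct, eq_of_le_of_card_ge ?_ ?_⟩
  · rw [closure_le, hπ]
    simpa [Set.range_subset_iff] using hσG
  · rw [nat_card_closure_cycleFactorsFinset, hct, Multiset.prod_replicate]
    calc Nat.card G ≤ ∏ ω : orbitRel.Quotient G α, Nat.card ω.orbit :=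
          nat_card_le_prod_nat_card_orbit G α
      _ = 3 ^ Nat.card (orbitRel.Quotient G α) := by simp [h3, Nat.card_eq_fintype_card]

theorem exists_cycleType_eq_replicate_of_three_pow_le (G : Subgroup (Perm α))
    [IsMulCommutative G] {k : ℕ} (hα : Nat.card α = 3 * k) (hG : 3 ^ k ≤ Nat.card G) :
    ∃ π : Perm α, π.cycleType = Multiset.replicate k 3 ∧
      closure (π.cycleFactorsFinset : Set (Perm α)) = G := by
  rw [← nat_card_orbitRel_quotient hα hG]
  exact exists_cycleType_eq_replicate_of_surjective G (smulOrbitOut_bijective hα hG).2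
    (nat_card_orbit_eq_three hα hG)

theorem exists_isMulCommutative_nat_card_eq_three_pow {k : ℕ} (hα : Nat.card α = 3 * k) :
    ∃ A : Subgroup (Perm α), IsMulCommutative A ∧ Nat.card A = 3 ^ k := by
  obtain ⟨π, hπ⟩ := (exists_with_cycleType_iff α (m := Multiset.replicate k 3)).mpr
    ⟨by rw [Multiset.sum_replicate, smul_eq_mul, ← Nat.card_eq_fintype_card, hα, mul_comm],
      fun a ha ↦ (Multiset.eq_of_mem_replicate ha).symm ▸ by norm_num⟩
  refine ⟨closure (π.cycleFactorsFinset : Set (Perm α)), inferInstance, ?_⟩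
  rw [nat_card_closure_cycleFactorsFinset, hπ, Multiset.prod_replicate]

end Equiv.Perm

open Equiv.Perm

/-- For `n ≡ 0 (mod 3)`, any two abelian subgroups of `S_n` of maximal order are
conjugate in `S_n`. -/
theorem maximal_abelian_conjugate_symmetric (k n : ℕ) (hn : n = 3 * k)
    (M N : Subgroup (Equiv.Perm (Fin n)))
    (hM : ∀ a b : M, a * b = b * a) (hN : ∀ a b : N, a * b = b * a)
    (hMmax : ∀ A : Subgroup (Equiv.Perm (Fin n)), (∀ a b : A, a * b = b * a) →
      Nat.card A ≤ Nat.card M)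
    (hNmax : ∀ A : Subgroup (Equiv.Perm (Fin n)), (∀ a b : A, a * b = b * a) →
      Nat.card A ≤ Nat.card N) :
    ∃ g : Equiv.Perm (Fin n), Subgroup.map (MulAut.conj g).toMonoidHom M = N := by
  have hcard : Nat.card (Fin n) = 3 * k := by rw [Nat.card_fin, hn]
  obtain ⟨A, hA, hAcard⟩ := exists_isMulCommutative_nat_card_eq_three_pow hcard
  have : IsMulCommutative M := ⟨⟨hM⟩⟩
  have : IsMulCommutative N := ⟨⟨hN⟩⟩
  obtain ⟨π, hπ, rfl⟩ :=
    exists_cycleType_eq_replicate_of_three_pow_le M hcard (hAcard ▸ hMmax A mul_comm')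
  obtain ⟨τ, hτ, rfl⟩ :=
    exists_cycleType_eq_replicate_of_three_pow_le N hcard (hAcard ▸ hNmax A mul_comm')
  obtain ⟨g, rfl⟩ := isConj_iff.mp (isConj_iff_cycleType_eq.mpr (hπ.trans hτ.symm))
  exact ⟨g, map_conj_closure_cycleFactorsFinset π g⟩
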